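/- arXiv:2307.01803 — 5 statements merged into one kernel-verified Lean document; each statement's English description precedes it below -/
import Mathlib

section
/- The 4-qubit vector s⊗s, where s = |00⟩+|01⟩+|10⟩ ∈ ℂ²⊗ℂ², can be written as a ℂ-linear combination of 3 stabiliser states of 4 qubits. In particular the stabiliser rank of s⊗s is at most 3. -/
noncomputable section

/-- States of `n` qubits, `(ℂ²)^{⊗n}`, as functions on bit strings. -/
abbrev QVec (n : ℕ) := (Fin n → Fin 2) → ℂ

/-- The Hadamard matrix `(1/√2)[[1,1],[1,-1]]`. -/
def hadamardM : Matrix (Fin 2) (Fin 2) ℂ :=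
  fun x y => if x = 1 ∧ y = 1 then -((Real.sqrt 2 : ℝ) : ℂ)⁻¹ else ((Real.sqrt 2 : ℝ) : ℂ)⁻¹

/-- The phase gate `diag(1, i)`. -/
def phaseM : Matrix (Fin 2) (Fin 2) ℂ := !![1, 0; 0, Complex.I]

/-- A single-qubit gate `M` acting on qubit `i` of `n`. -/
def apply1 (n : ℕ) (i : Fin n) (M : Matrix (Fin 2) (Fin 2) ℂ) :
    Matrix (Fin n → Fin 2) (Fin n → Fin 2) ℂ :=
  fun x y => if ∀ j, j ≠ i → x j = y j then M (x i) (y i) else 0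

/-- The controlled-Z gate acting on qubits `i` and `j` of `n`. -/
def applyCZ (n : ℕ) (i j : Fin n) :
    Matrix (Fin n → Fin 2) (Fin n → Fin 2) ℂ :=
  fun x y => if x = y then (if x i = 1 ∧ x j = 1 then -1 else 1) else 0

/-- The `n`-qubit Clifford group: the subgroup generated by single-qubit Hadamard
gates, single-qubit phase gates, and controlled-Z gates. -/
inductive Clifford (n : ℕ) : Matrix (Fin n → Fin 2) (Fin n → Fin 2) ℂ → Prop
  | had (i : Fin n) : Clifford n (apply1 n i hadamardM)
  | phase (i : Fin n) : Clifford n (apply1 n i phaseM)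
  | cz (i j : Fin n) (hij : i ≠ j) : Clifford n (applyCZ n i j)
  | one : Clifford n 1
  | mul {A B} : Clifford n A → Clifford n B → Clifford n (A * B)
  | inv {A} : Clifford n A → Clifford n A⁻¹

/-- `|0⟩^{⊗n}` -/
def ketZeros (n : ℕ) : QVec n := fun x => if ∀ i, x i = 0 then 1 else 0

/-- An `n`-qubit stabiliser state: `g·|0⟩^{⊗n}` for `g` in the Clifford group. -/
def IsStabState (n : ℕ) (v : QVec n) : Prop :=
  ∃ g, Clifford n g ∧ v = g.mulVec (ketZeros n)

/-- `v` is a ℂ-linear combination of `k` stabiliser states;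
in particular its stabiliser rank is at most `k`. -/
def StabRankLE (n : ℕ) (v : QVec n) (k : ℕ) : Prop :=
  ∃ (c : Fin k → ℂ) (ψ : Fin k → QVec n),
    (∀ i, IsStabState n (ψ i)) ∧ v = ∑ i, c i • ψ i

/-- `s^{⊗m}` on `2m` qubits, where `s = |00⟩+|01⟩+|10⟩ ∈ ℂ²⊗ℂ²`. -/
def sPow (m : ℕ) : QVec (2 * m) := fun x =>
  ∏ k : Fin m,
    if x ⟨2 * k.1, by have := k.isLt; omega⟩ = 1 ∧
       x ⟨2 * k.1 + 1, by have := k.isLt; omega⟩ = 1 then 0 else 1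

-- helper: sum over two updates
lemma apply1_mulVec (n : ℕ) (i : Fin n) (M : Matrix (Fin 2) (Fin 2) ℂ) (v : QVec n) :
    (apply1 n i M).mulVec v = fun x =>
      M (x i) 0 * v (Function.update x i 0) + M (x i) 1 * v (Function.update x i 1) := by
  funext x
  have hne : Function.update x i 0 ≠ Function.update x i 1 := by
    intro h
    have := congrFun h i
    simp at this
  have key : ∀ y : Fin n → Fin 2, y ∉ ({Function.update x i 0, Function.update x i 1} : Finset _) →
      (apply1 n i M) x y * v y = 0 := by
    intro y hy
    rw [apply1]
    by_cases h : ∀ j, j ≠ i → x j = y j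
    · exfalso
      apply hy
      have hyu : y = Function.update x i (y i) := by
        funext j
        by_cases hj : j = i
        · subst hj; simp
        · rw [Function.update_of_ne hj]; exact (h j hj).symm
      have : y i = 0 ∨ y i = 1 := by omega
      rcases this with h0 | h1
      · simp [Finset.mem_insert]; left; rw [hyu, h0]
      · simp [Finset.mem_insert]; right; rw [hyu, h1]
    · simp [h]
  show (∑ y, (apply1 n i M) x y * v y) = _
  rw [← Finset.sum_subset (Finset.subset_univ {Function.update x i 0, Function.update x i 1})
    (fun y _ hy => key y hy)]
  rw [Finset.sum_pair hne]
  have h0 : (apply1 n i M) x (Function.update x i 0) = M (x i) 0 := by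
    rw [apply1]
    rw [if_pos]
    · simp
    · intro j hj; rw [Function.update_of_ne hj]
  have h1 : (apply1 n i M) x (Function.update x i 1) = M (x i) 1 := by
    rw [apply1]
    rw [if_pos]
    · simp
    · intro j hj; rw [Function.update_of_ne hj]
  rw [h0, h1]

lemma applyCZ_mulVec (n : ℕ) (i j : Fin n) (v : QVec n) :
    (applyCZ n i j).mulVec v = fun x => (if x i = 1 ∧ x j = 1 then -1 else 1) * v x := by
  funext x
  show (∑ y, (applyCZ n i j) x y * v y) = _
  rw [Finset.sum_eq_single_of_mem x (Finset.mem_univ x)]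
  · rw [applyCZ]; simp
  · intro y _ hy
    rw [applyCZ]
    rw [if_neg (fun h => hy h.symm)]
    simp

def r : ℂ := ((Real.sqrt 2 : ℝ) : ℂ)⁻¹

lemma r_mul_r : r * r = 1 / 2 := by
  have h : ((Real.sqrt 2 : ℝ) : ℂ) * ((Real.sqrt 2 : ℝ) : ℂ) = 2 := by
    rw [← Complex.ofReal_mul, Real.mul_self_sqrt (by norm_num)]
    norm_num
  rw [r, ← mul_inv, h]
  norm_num

lemma hadamardM_eq : hadamardM = fun x y => if x = 1 ∧ y = 1 then -r else r := rfl

lemma phaseM00 : phaseM 0 0 = 1 := rfl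
lemma phaseM01 : phaseM 0 1 = 0 := rfl
lemma phaseM10 : phaseM 1 0 = 0 := rfl
lemma phaseM11 : phaseM 1 1 = Complex.I := rfl

def q0 : Fin 2 → ℂ := fun b => if b = 0 then 1 else 0
def q1 : Fin 2 → ℂ := fun b => if b = 1 then 1 else 0
def qp : Fin 2 → ℂ := fun _ => r
def qi : Fin 2 → ℂ := fun b => if b = 1 then Complex.I * r else r
def qm : Fin 2 → ℂ := fun b => if b = 1 then -r else r

lemma mulVec2 (M : Matrix (Fin 2) (Fin 2) ℂ) (a : Fin 2 → ℂ) (b : Fin 2) :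
    M.mulVec a b = M b 0 * a 0 + M b 1 * a 1 := by
  show (∑ y, M b y * a y) = _
  rw [Fin.sum_univ_two]

lemma had_q0 : hadamardM.mulVec q0 = qp := by
  funext b
  rw [mulVec2, hadamardM_eq]
  fin_cases b <;> simp [q0, qp]

lemma phase_qp : phaseM.mulVec qp = qi := by
  funext b
  rw [mulVec2]
  fin_cases b <;> simp [phaseM00, phaseM01, phaseM10, phaseM11, qp, qi]

lemma phase_qi : phaseM.mulVec qi = qm := by
  funext b
  rw [mulVec2]
  fin_cases b <;> simp [phaseM00, phaseM01, phaseM10, phaseM11, qi, qm]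
  linear_combination r * Complex.I_mul_I

lemma had_qm : hadamardM.mulVec qm = q1 := by
  funext b
  rw [mulVec2, hadamardM_eq]
  fin_cases b <;> simp [qm, q1]
  linear_combination 2 * r_mul_r


def prod4 (a b c d : Fin 2 → ℂ) : QVec 4 := fun x => a (x 0) * b (x 1) * c (x 2) * d (x 3)

lemma forall_fin4 (P : Fin 4 → Prop) : (∀ i, P i) ↔ P 0 ∧ P 1 ∧ P 2 ∧ P 3 := by
  constructor
  · intro h; exact ⟨h 0, h 1, h 2, h 3⟩
  · rintro ⟨h0, h1, h2, h3⟩ i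
    fin_cases i <;> assumption

lemma ketZeros_eq : ketZeros 4 = prod4 q0 q0 q0 q0 := by
  funext x
  rw [ketZeros, prod4]
  simp only [forall_fin4]
  by_cases h0 : x 0 = 0 <;> by_cases h1 : x 1 = 0 <;> by_cases h2 : x 2 = 0 <;>
    by_cases h3 : x 3 = 0 <;> simp [q0, h0, h1, h2, h3]

lemma upd_prod4 (a b c d : Fin 2 → ℂ) (x : Fin 4 → Fin 2) (t : Fin 2) :
    prod4 a b c d (Function.update x 0 t)
      = a t * b (x 1) * c (x 2) * d (x 3) := by
  rw [prod4]
  rw [Function.update_self, Function.update_of_ne (by decide), Function.update_of_ne (by decide),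
    Function.update_of_ne (by decide)]

lemma ap0 (M : Matrix (Fin 2) (Fin 2) ℂ) (a b c d : Fin 2 → ℂ) :
    (apply1 4 0 M).mulVec (prod4 a b c d) = prod4 (M.mulVec a) b c d := by
  funext x
  rw [apply1_mulVec]
  show M (x 0) 0 * prod4 a b c d (Function.update x 0 0)
      + M (x 0) 1 * prod4 a b c d (Function.update x 0 1) = _
  rw [upd_prod4, upd_prod4, prod4, mulVec2]
  ring

lemma ap1 (M : Matrix (Fin 2) (Fin 2) ℂ) (a b c d : Fin 2 → ℂ) :
    (apply1 4 1 M).mulVec (prod4 a b c d) = prod4 a (M.mulVec b) c d := by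
  funext x
  rw [apply1_mulVec]
  show M (x 1) 0 * prod4 a b c d (Function.update x 1 0)
      + M (x 1) 1 * prod4 a b c d (Function.update x 1 1) = _
  rw [prod4, prod4, prod4, mulVec2]
  rw [Function.update_self, Function.update_self,
    Function.update_of_ne (by decide : (0:Fin 4) ≠ 1), Function.update_of_ne (by decide : (2:Fin 4) ≠ 1),
    Function.update_of_ne (by decide : (3:Fin 4) ≠ 1), Function.update_of_ne (by decide : (0:Fin 4) ≠ 1),
    Function.update_of_ne (by decide : (2:Fin 4) ≠ 1), Function.update_of_ne (by decide : (3:Fin 4) ≠ 1)]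
  ring

lemma ap2 (M : Matrix (Fin 2) (Fin 2) ℂ) (a b c d : Fin 2 → ℂ) :
    (apply1 4 2 M).mulVec (prod4 a b c d) = prod4 a b (M.mulVec c) d := by
  funext x
  rw [apply1_mulVec]
  show M (x 2) 0 * prod4 a b c d (Function.update x 2 0)
      + M (x 2) 1 * prod4 a b c d (Function.update x 2 1) = _
  rw [prod4, prod4, prod4, mulVec2]
  rw [Function.update_self, Function.update_self,
    Function.update_of_ne (by decide : (0:Fin 4) ≠ 2), Function.update_of_ne (by decide : (1:Fin 4) ≠ 2),
    Function.update_of_ne (by decide : (3:Fin 4) ≠ 2), Function.update_of_ne (by decide : (0:Fin 4) ≠ 2),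
    Function.update_of_ne (by decide : (1:Fin 4) ≠ 2), Function.update_of_ne (by decide : (3:Fin 4) ≠ 2)]
  ring

lemma ap3 (M : Matrix (Fin 2) (Fin 2) ℂ) (a b c d : Fin 2 → ℂ) :
    (apply1 4 3 M).mulVec (prod4 a b c d) = prod4 a b c (M.mulVec d) := by
  funext x
  rw [apply1_mulVec]
  show M (x 3) 0 * prod4 a b c d (Function.update x 3 0)
      + M (x 3) 1 * prod4 a b c d (Function.update x 3 1) = _
  rw [prod4, prod4, prod4, mulVec2]
  rw [Function.update_self, Function.update_self,
    Function.update_of_ne (by decide : (0:Fin 4) ≠ 3), Function.update_of_ne (by decide : (1:Fin 4) ≠ 3),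
    Function.update_of_ne (by decide : (2:Fin 4) ≠ 3), Function.update_of_ne (by decide : (0:Fin 4) ≠ 3),
    Function.update_of_ne (by decide : (1:Fin 4) ≠ 3), Function.update_of_ne (by decide : (2:Fin 4) ≠ 3)]
  ring


-- the three stabiliser states
def psi3 : QVec 4 := prod4 qp qp qp qp
def psi2 : QVec 4 := prod4 q1 q1 q1 q1
def psi1 : QVec 4 := fun x =>
  (if x 0 = 1 ∧ x 1 = 1 then -1 else 1) * ((if x 2 = 1 ∧ x 3 = 1 then -1 else 1) * psi3 x)

def G3 : Matrix (Fin 4 → Fin 2) (Fin 4 → Fin 2) ℂ :=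
  apply1 4 0 hadamardM * (apply1 4 1 hadamardM * (apply1 4 2 hadamardM * apply1 4 3 hadamardM))

lemma G3_clifford : Clifford 4 G3 :=
  Clifford.mul (Clifford.had 0) (Clifford.mul (Clifford.had 1)
    (Clifford.mul (Clifford.had 2) (Clifford.had 3)))

lemma G3_mulVec : G3.mulVec (ketZeros 4) = psi3 := by
  rw [G3]
  simp only [← Matrix.mulVec_mulVec]
  rw [ketZeros_eq, ap3, had_q0, ap2, had_q0, ap1, had_q0, ap0, had_q0, psi3]

lemma psi3_stab : IsStabState 4 psi3 := ⟨G3, G3_clifford, G3_mulVec.symm⟩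

lemma psi1_stab : IsStabState 4 psi1 := by
  refine ⟨applyCZ 4 0 1 * (applyCZ 4 2 3 * G3),
    Clifford.mul (Clifford.cz 0 1 (by decide)) (Clifford.mul (Clifford.cz 2 3 (by decide)) G3_clifford), ?_⟩
  simp only [← Matrix.mulVec_mulVec]
  rw [G3_mulVec, applyCZ_mulVec, applyCZ_mulVec]
  rfl

def Xgate (i : Fin 4) : Matrix (Fin 4 → Fin 2) (Fin 4 → Fin 2) ℂ :=
  apply1 4 i hadamardM * (apply1 4 i phaseM * (apply1 4 i phaseM * apply1 4 i hadamardM))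

lemma Xgate_clifford (i : Fin 4) : Clifford 4 (Xgate i) :=
  Clifford.mul (Clifford.had i) (Clifford.mul (Clifford.phase i)
    (Clifford.mul (Clifford.phase i) (Clifford.had i)))

lemma psi2_stab : IsStabState 4 psi2 := by
  refine ⟨Xgate 0 * (Xgate 1 * (Xgate 2 * Xgate 3)),
    Clifford.mul (Xgate_clifford 0) (Clifford.mul (Xgate_clifford 1)
      (Clifford.mul (Xgate_clifford 2) (Xgate_clifford 3))), ?_⟩
  simp only [Xgate, ← Matrix.mulVec_mulVec]
  rw [ketZeros_eq,
    ap3, had_q0, ap3, phase_qp, ap3, phase_qi, ap3, had_qm,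
    ap2, had_q0, ap2, phase_qp, ap2, phase_qi, ap2, had_qm,
    ap1, had_q0, ap1, phase_qp, ap1, phase_qi, ap1, had_qm,
    ap0, had_q0, ap0, phase_qp, ap0, phase_qi, ap0, had_qm, psi2]

lemma psi3_val (x : Fin 4 → Fin 2) : psi3 x = 1 / 4 := by
  rw [psi3, prod4]
  show r * r * r * r = 1 / 4
  linear_combination (r * r + 1 / 2) * r_mul_r

lemma sPow2_eq (x : Fin (2 * 2) → Fin 2) :
    sPow 2 x = (if x 0 = 1 ∧ x 1 = 1 then 0 else 1) * (if x 2 = 1 ∧ x 3 = 1 then 0 else 1) := by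
  rw [sPow]
  rw [Fin.prod_univ_two]
  rfl


/-- `s⊗s`, where `s = |00⟩+|01⟩+|10⟩`, is a ℂ-linear combination of 3 stabiliser
states of 4 qubits; in particular its stabiliser rank is at most 3. -/
theorem sPow_two_stabRank_le_three : StabRankLE (2 * 2) (sPow 2) 3 := by
  refine ⟨![2, -1, 2], ![psi1, psi2, psi3], ?_, ?_⟩
  · intro i
    fin_cases i
    · exact psi1_stab
    · exact psi2_stab
    · exact psi3_stab
  · funext x
    rw [Fin.sum_univ_three]
    simp only [Matrix.cons_val_zero, Matrix.cons_val_one, Matrix.head_cons,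
      Matrix.cons_val_two, Matrix.tail_cons, Pi.add_apply, Pi.smul_apply, smul_eq_mul]
    rw [sPow2_eq, psi1, psi2, prod4]
    rw [psi3_val]
    have two : ∀ b : Fin 2, b = 0 ∨ b = 1 := by decide
    rcases two (x 0) with h0 | h0 <;> rcases two (x 1) with h1 | h1 <;>
      rcases two (x 2) with h2 | h2 <;> rcases two (x 3) with h3 | h3 <;>
      simp [q1, h0, h1, h2, h3] <;> norm_num


end
end

section
/- The 6-qubit vector s⊗s⊗s, where s = |00⟩+|01⟩+|10⟩ ∈ ℂ²⊗ℂ², can be written as a ℂ-linear combination of 5 stabiliser states of 6 qubits. In particular the stabiliser rank of s⊗s⊗s is at most 5. -/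
noncomputable section

namespace SPowAux

/-- Summing a function supported on the two updates of `x` at `i`. -/
lemma sum_two_terms {n : ℕ} (i : Fin n) (x : Fin n → Fin 2) (f : (Fin n → Fin 2) → ℂ)
    (F : Fin 2 → ℂ)
    (hf : ∀ b : Fin 2, f (Function.update x i b) = F b)
    (hf0 : ∀ y, ¬ (∀ j, j ≠ i → x j = y j) → f y = 0) :
    ∑ y, f y = F 0 + F 1 := by
  have hne : Function.update x i (0 : Fin 2) ≠ Function.update x i 1 := by
    intro h'
    have h1 := congrFun h' i
    simp only [Function.update_self] at h1
    exact absurd h1 (by decide)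
  have key : ∀ y, f y = (if y = Function.update x i 0 then F 0 else 0)
      + (if y = Function.update x i 1 then F 1 else 0) := by
    intro y
    by_cases h : ∀ j, j ≠ i → x j = y j
    · have hy : y = Function.update x i (y i) := by
        funext j
        by_cases hj : j = i
        · subst hj; simp
        · simp [Function.update_apply, hj, (h j hj).symm]
      rcases (show y i = 0 ∨ y i = 1 by omega) with h0 | h0 <;> rw [h0] at hy <;> rw [hy]
      · rw [if_pos rfl, if_neg hne, add_zero, hf]
      · rw [if_neg (Ne.symm hne), if_pos rfl, zero_add, hf]
    · have h0 : y ≠ Function.update x i 0 := by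
        intro h'
        exact h (fun j hj => by rw [h']; simp [Function.update_apply, hj])
      have h1 : y ≠ Function.update x i 1 := by
        intro h'
        exact h (fun j hj => by rw [h']; simp [Function.update_apply, hj])
      rw [hf0 y h, if_neg h0, if_neg h1, add_zero]
  rw [Finset.sum_congr rfl (fun y _ => key y), Finset.sum_add_distrib,
    Fintype.sum_ite_eq', Fintype.sum_ite_eq']

lemma update_agrees {n : ℕ} (i : Fin n) (x : Fin n → Fin 2) (b : Fin 2) :
    ∀ j, j ≠ i → x j = Function.update x i b j := by
  intro j hj
  simp [Function.update_apply, hj]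

/-- Action of a single-qubit gate on a vector, computed pointwise. -/
lemma mulVec_apply1 {n : ℕ} (i : Fin n) (M : Matrix (Fin 2) (Fin 2) ℂ)
    (v : QVec n) (x : Fin n → Fin 2) :
    (apply1 n i M).mulVec v x
      = M (x i) 0 * v (Function.update x i 0) + M (x i) 1 * v (Function.update x i 1) := by
  show (∑ y, apply1 n i M x y * v y) = _
  refine sum_two_terms i x _ (fun b => M (x i) b * v (Function.update x i b)) ?_ ?_
  · intro b
    simp only [apply1, if_pos (update_agrees i x b), Function.update_self]
  · intro y hy
    simp [apply1, hy]

/-- Action of controlled-Z on a vector, computed pointwise. -/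
lemma mulVec_applyCZ {n : ℕ} (i j : Fin n) (v : QVec n) (x : Fin n → Fin 2) :
    (applyCZ n i j).mulVec v x = (if x i = 1 ∧ x j = 1 then -1 else 1) * v x := by
  show (∑ y, applyCZ n i j x y * v y) = _
  simp only [applyCZ, ite_mul, zero_mul]
  rw [Fintype.sum_ite_eq]

lemma apply1_mul {n : ℕ} (i : Fin n) (A B : Matrix (Fin 2) (Fin 2) ℂ) :
    apply1 n i A * apply1 n i B = apply1 n i (A * B) := by
  ext x y
  rw [Matrix.mul_apply]
  by_cases h : ∀ j, j ≠ i → x j = y j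
  · have h1 : ∀ b : Fin 2, apply1 n i A x (Function.update x i b)
        * apply1 n i B (Function.update x i b) y = A (x i) b * B b (y i) := by
      intro b
      have hby : ∀ j, j ≠ i → Function.update x i b j = y j := by
        intro j hj
        rw [← update_agrees i x b j hj]
        exact h j hj
      simp only [apply1, if_pos (update_agrees i x b), if_pos hby, Function.update_self]
    have h2 : ∀ z, ¬ (∀ j, j ≠ i → x j = z j)
        → apply1 n i A x z * apply1 n i B z y = 0 := by
      intro z hz
      simp [apply1, hz]
    rw [sum_two_terms i x _ (fun b => A (x i) b * B b (y i)) h1 h2]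
    simp only [apply1, if_pos h, Matrix.mul_apply, Fin.sum_univ_two]
  · have key : ∀ z : Fin n → Fin 2, apply1 n i A x z * apply1 n i B z y = 0 := by
      intro z
      by_cases h1 : ∀ j, j ≠ i → x j = z j
      · have h2 : ¬ ∀ j, j ≠ i → z j = y j :=
          fun h2 => h (fun j hj => (h1 j hj).trans (h2 j hj))
        simp [apply1, h2]
      · simp [apply1, h1]
    rw [Finset.sum_congr rfl (fun z _ => key z), Finset.sum_const_zero]
    simp [apply1, h]

lemma sqrt2_sq : ((Real.sqrt 2 : ℝ) : ℂ) * ((Real.sqrt 2 : ℝ) : ℂ) = 2 := by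
  rw [← Complex.ofReal_mul]
  norm_num [Real.mul_self_sqrt]

/-- The matrix HSSH = X. -/
lemma XM_eq : hadamardM * (phaseM * (phaseM * hadamardM)) = !![0,1;1,0] := by
  have h2 := sqrt2_sq
  have hne : ((Real.sqrt 2 : ℝ) : ℂ) ≠ 0 := by
    intro h; rw [h] at h2; simp at h2
  ext a b
  fin_cases a <;> fin_cases b <;>
    simp only [Matrix.mul_apply, Fin.sum_univ_two, hadamardM, phaseM,
      Matrix.cons_val', Matrix.cons_val_zero, Matrix.cons_val_one, Matrix.head_cons,
      Matrix.head_fin_const, Matrix.empty_val', Matrix.cons_val_fin_one] <;>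
    norm_num [Complex.ext_iff, div_mul_div_comm, Real.mul_self_sqrt]

noncomputable def r : ℂ := (((Real.sqrt 2 : ℝ)) : ℂ)⁻¹

lemma r_mul_r : r * r = 2⁻¹ := by
  rw [r, ← mul_inv, sqrt2_sq]

lemma r6 : r ^ 6 = 8⁻¹ := by
  have : r ^ 6 = (r * r) ^ 3 := by ring
  rw [this, r_mul_r]
  norm_num

/-- Intermediate states in building the uniform state by Hadamards. -/
noncomputable def wH (k : ℕ) : QVec 6 := fun x =>
  if ∀ j : Fin 6, (j : ℕ) < k → x j = 0 then r ^ (6 - k) else 0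

lemma hadamardM_apply_zero (a : Fin 2) : hadamardM a 0 = r := by
  simp [hadamardM, r]

lemma wH_step (i : Fin 6) :
    (apply1 6 i hadamardM).mulVec (wH ((i : ℕ) + 1)) = wH (i : ℕ) := by
  funext x
  rw [mulVec_apply1]
  have h1 : wH ((i : ℕ) + 1) (Function.update x i 1) = 0 := by
    rw [wH, if_neg]
    push_neg
    exact ⟨i, by omega, by simp⟩
  have hiff : (∀ j : Fin 6, (j : ℕ) < (i : ℕ) + 1 → Function.update x i 0 j = 0)
      ↔ (∀ j : Fin 6, (j : ℕ) < (i : ℕ) → x j = 0) := by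
    constructor
    · intro h j hj
      have := h j (by omega)
      rwa [Function.update_apply, if_neg (fun hji => by subst hji; omega)] at this
    · intro h j hj
      rw [Function.update_apply]
      by_cases hji : j = i
      · simp [hji]
      · rw [if_neg hji]
        exact h j (by
          have : (j : ℕ) ≠ (i : ℕ) := fun hc => hji (Fin.ext hc)
          omega)
  have h0 : wH ((i : ℕ) + 1) (Function.update x i 0)
      = if ∀ j : Fin 6, (j : ℕ) < (i : ℕ) → x j = 0 then r ^ (6 - ((i : ℕ) + 1)) else 0 := by
    rw [wH]
    exact if_congr hiff rfl rfl
  rw [h0, h1, hadamardM_apply_zero, wH, mul_zero, add_zero]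
  have hlt : (i : ℕ) < 6 := i.isLt
  have hpow : (6 : ℕ) - (i : ℕ) = (6 - ((i : ℕ) + 1)) + 1 := by omega
  rw [hpow, pow_succ]
  split <;> ring

noncomputable def H6 : Matrix (Fin 6 → Fin 2) (Fin 6 → Fin 2) ℂ :=
  apply1 6 0 hadamardM * (apply1 6 1 hadamardM * (apply1 6 2 hadamardM *
    (apply1 6 3 hadamardM * (apply1 6 4 hadamardM * apply1 6 5 hadamardM))))

lemma H6_clifford : Clifford 6 H6 :=
  Clifford.mul (Clifford.had 0) (Clifford.mul (Clifford.had 1) (Clifford.mul (Clifford.had 2)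
    (Clifford.mul (Clifford.had 3) (Clifford.mul (Clifford.had 4) (Clifford.had 5)))))

lemma ketZeros_eq_wH : ketZeros 6 = wH 6 := by
  funext x
  rw [ketZeros, wH, pow_zero]
  exact if_congr ⟨fun h j _ => h j, fun h j => h j j.isLt⟩ rfl rfl

lemma H6_mulVec : H6.mulVec (ketZeros 6) = fun _ => r ^ 6 := by
  rw [ketZeros_eq_wH, H6, ← Matrix.mulVec_mulVec, ← Matrix.mulVec_mulVec,
    ← Matrix.mulVec_mulVec, ← Matrix.mulVec_mulVec, ← Matrix.mulVec_mulVec]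
  have e5 : (apply1 6 5 hadamardM).mulVec (wH 6) = wH 5 := wH_step 5
  have e4 : (apply1 6 4 hadamardM).mulVec (wH 5) = wH 4 := wH_step 4
  have e3 : (apply1 6 3 hadamardM).mulVec (wH 4) = wH 3 := wH_step 3
  have e2 : (apply1 6 2 hadamardM).mulVec (wH 3) = wH 2 := wH_step 2
  have e1 : (apply1 6 1 hadamardM).mulVec (wH 2) = wH 1 := wH_step 1
  have e0 : (apply1 6 0 hadamardM).mulVec (wH 1) = wH 0 := wH_step 0
  rw [e5, e4, e3, e2, e1, e0]
  funext x
  rw [wH, if_pos (fun j hj => absurd hj (by omega))]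

/-- Intermediate states in building the all-ones state by X gates. -/
noncomputable def tX (k : ℕ) : QVec 6 := fun x =>
  if (∀ j : Fin 6, k ≤ (j : ℕ) → x j = 1) ∧ (∀ j : Fin 6, (j : ℕ) < k → x j = 0) then 1 else 0

noncomputable def Xg (i : Fin 6) : Matrix (Fin 6 → Fin 2) (Fin 6 → Fin 2) ℂ :=
  apply1 6 i hadamardM * (apply1 6 i phaseM * (apply1 6 i phaseM * apply1 6 i hadamardM))

lemma Xg_clifford (i : Fin 6) : Clifford 6 (Xg i) :=
  Clifford.mul (Clifford.had i) (Clifford.mul (Clifford.phase i)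
    (Clifford.mul (Clifford.phase i) (Clifford.had i)))

lemma Xg_eq (i : Fin 6) : Xg i = apply1 6 i !![0,1;1,0] := by
  rw [Xg, apply1_mul, apply1_mul, apply1_mul, XM_eq]

lemma tX_step (i : Fin 6) :
    (Xg i).mulVec (tX ((i : ℕ) + 1)) = tX (i : ℕ) := by
  rw [Xg_eq]
  funext x
  rw [mulVec_apply1]
  rcases (show x i = 0 ∨ x i = 1 by omega) with h | h
  · have hz : tX ((i : ℕ) + 1) (Function.update x i 1) = 0 := by
      rw [tX, if_neg]
      intro hc
      have := hc.2 i (by omega)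
      simp at this
    have hz2 : tX (i : ℕ) x = 0 := by
      rw [tX, if_neg]
      intro hc
      have := hc.1 i (by omega)
      rw [h] at this
      exact absurd this (by decide)
    rw [h, hz, hz2]
    norm_num [Matrix.cons_val_zero, Matrix.cons_val_one]
  · have hz : tX ((i : ℕ) + 1) (Function.update x i 0)
        = tX (i : ℕ) x := by
      rw [tX, tX]
      refine if_congr ⟨fun hc => ⟨fun j hj => ?_, fun j hj => ?_⟩,
        fun hc => ⟨fun j hj => ?_, fun j hj => ?_⟩⟩ rfl rfl
      · rcases Nat.eq_or_lt_of_le hj with he | hlt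
        · have : j = i := Fin.ext he.symm
          rw [this, h]
        · have hji : j ≠ i := fun hc' => by rw [hc'] at hlt; omega
          have := hc.1 j (by omega)
          rwa [Function.update_apply, if_neg hji] at this
      · have hji : j ≠ i := fun hc' => by rw [hc'] at hj; omega
        have := hc.2 j (by omega)
        rwa [Function.update_apply, if_neg hji] at this
      · rw [Function.update_apply]
        by_cases hji : j = i
        · exfalso; rw [hji] at hj; omega
        · rw [if_neg hji]
          exact hc.1 j (by omega)
      · rw [Function.update_apply]
        by_cases hji : j = i
        · simp [hji]
        · rw [if_neg hji]
          refine hc.2 j ?_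
          have : (j : ℕ) ≠ (i : ℕ) := fun hcc => hji (Fin.ext hcc)
          omega
    rw [h, hz]
    norm_num [Matrix.cons_val_zero, Matrix.cons_val_one]

noncomputable def X6 : Matrix (Fin 6 → Fin 2) (Fin 6 → Fin 2) ℂ :=
  Xg 0 * (Xg 1 * (Xg 2 * (Xg 3 * (Xg 4 * Xg 5))))

lemma X6_clifford : Clifford 6 X6 :=
  Clifford.mul (Xg_clifford 0) (Clifford.mul (Xg_clifford 1) (Clifford.mul (Xg_clifford 2)
    (Clifford.mul (Xg_clifford 3) (Clifford.mul (Xg_clifford 4) (Xg_clifford 5)))))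

lemma ketZeros_eq_tX : ketZeros 6 = tX 6 := by
  funext x
  rw [ketZeros, tX]
  refine if_congr ⟨fun h => ⟨fun j hj => absurd hj (by omega), fun j _ => h j⟩,
    fun h j => h.2 j j.isLt⟩ rfl rfl

lemma X6_mulVec : X6.mulVec (ketZeros 6) = tX 0 := by
  rw [ketZeros_eq_tX, X6, ← Matrix.mulVec_mulVec, ← Matrix.mulVec_mulVec,
    ← Matrix.mulVec_mulVec, ← Matrix.mulVec_mulVec, ← Matrix.mulVec_mulVec]
  have e5 : (Xg 5).mulVec (tX 6) = tX 5 := tX_step 5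
  have e4 : (Xg 4).mulVec (tX 5) = tX 4 := tX_step 4
  have e3 : (Xg 3).mulVec (tX 4) = tX 3 := tX_step 3
  have e2 : (Xg 2).mulVec (tX 3) = tX 2 := tX_step 2
  have e1 : (Xg 1).mulVec (tX 2) = tX 1 := tX_step 1
  have e0 : (Xg 0).mulVec (tX 1) = tX 0 := tX_step 0
  rw [e5, e4, e3, e2, e1, e0]

end SPowAux

namespace SPowAux

noncomputable def psiA : QVec 6 := fun _ => r ^ 6
noncomputable def psiB : QVec 6 := fun x =>
  (if x 0 = 1 ∧ x 1 = 1 then -1 else 1) * ((if x 2 = 1 ∧ x 3 = 1 then -1 else 1) * r ^ 6)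
noncomputable def psiC : QVec 6 := fun x =>
  (if x 0 = 1 ∧ x 1 = 1 then -1 else 1) * ((if x 4 = 1 ∧ x 5 = 1 then -1 else 1) * r ^ 6)
noncomputable def psiD : QVec 6 := fun x =>
  (if x 2 = 1 ∧ x 3 = 1 then -1 else 1) * ((if x 4 = 1 ∧ x 5 = 1 then -1 else 1) * r ^ 6)

lemma stabA : IsStabState 6 psiA := ⟨H6, H6_clifford, H6_mulVec.symm⟩

lemma stabB : IsStabState 6 psiB := by
  refine ⟨applyCZ 6 0 1 * (applyCZ 6 2 3 * H6),
    Clifford.mul (Clifford.cz 0 1 (by decide))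
      (Clifford.mul (Clifford.cz 2 3 (by decide)) H6_clifford), ?_⟩
  rw [← Matrix.mulVec_mulVec, ← Matrix.mulVec_mulVec, H6_mulVec]
  funext x
  rw [psiB, mulVec_applyCZ, mulVec_applyCZ]

lemma stabC : IsStabState 6 psiC := by
  refine ⟨applyCZ 6 0 1 * (applyCZ 6 4 5 * H6),
    Clifford.mul (Clifford.cz 0 1 (by decide))
      (Clifford.mul (Clifford.cz 4 5 (by decide)) H6_clifford), ?_⟩
  rw [← Matrix.mulVec_mulVec, ← Matrix.mulVec_mulVec, H6_mulVec]
  funext x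
  rw [psiC, mulVec_applyCZ, mulVec_applyCZ]

lemma stabD : IsStabState 6 psiD := by
  refine ⟨applyCZ 6 2 3 * (applyCZ 6 4 5 * H6),
    Clifford.mul (Clifford.cz 2 3 (by decide))
      (Clifford.mul (Clifford.cz 4 5 (by decide)) H6_clifford), ?_⟩
  rw [← Matrix.mulVec_mulVec, ← Matrix.mulVec_mulVec, H6_mulVec]
  funext x
  rw [psiD, mulVec_applyCZ, mulVec_applyCZ]

lemma stabE : IsStabState 6 (tX 0) := ⟨X6, X6_clifford, X6_mulVec.symm⟩

end SPowAux

/-- `s⊗s⊗s`, where `s = |00⟩+|01⟩+|10⟩`, is a ℂ-linear combination of 5 stabiliser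
states of 6 qubits; in particular its stabiliser rank is at most 5. -/
theorem sPow_three_stabRank_le_five : StabRankLE (2 * 3) (sPow 3) 5 := by
  classical
  refine ⟨![2, 2, 2, 2, -1],
    ![SPowAux.psiA, SPowAux.psiB, SPowAux.psiC, SPowAux.psiD, SPowAux.tX 0], fun i => ?_, ?_⟩
  · fin_cases i
    · exact SPowAux.stabA
    · exact SPowAux.stabB
    · exact SPowAux.stabC
    · exact SPowAux.stabD
    · exact SPowAux.stabE
  · funext x
    have hsum : (∑ i : Fin 5, (![2, 2, 2, 2, -1] : Fin 5 → ℂ) i •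
        (![SPowAux.psiA, SPowAux.psiB, SPowAux.psiC, SPowAux.psiD, SPowAux.tX 0]
          : Fin 5 → QVec 6) i) x
        = 2 * SPowAux.psiA x + 2 * SPowAux.psiB x + 2 * SPowAux.psiC x
          + 2 * SPowAux.psiD x + (-1) * SPowAux.tX 0 x := by
      rw [Fin.sum_univ_five]
      simp [Matrix.cons_val_zero, Matrix.cons_val_one, Matrix.head_cons]
      try ring
    rw [hsum]
    have hs : sPow 3 x = (if x 0 = 1 ∧ x 1 = 1 then 0 else 1) *
        (if x 2 = 1 ∧ x 3 = 1 then 0 else 1) * (if x 4 = 1 ∧ x 5 = 1 then 0 else 1) := by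
      rw [sPow, Fin.prod_univ_three]
      rfl
    have ht : SPowAux.tX 0 x = if (∀ j : Fin 6, x j = 1) then 1 else 0 := by
      rw [SPowAux.tX]
      exact if_congr ⟨fun h j => h.1 j (Nat.zero_le _),
        fun h => ⟨fun j _ => h j, fun j hj => absurd hj (by omega)⟩⟩ rfl rfl
    rw [hs, ht, SPowAux.psiA, SPowAux.psiB, SPowAux.psiC, SPowAux.psiD, SPowAux.r6]
    by_cases hA : x 0 = 1 ∧ x 1 = 1 <;> by_cases hB : x 2 = 1 ∧ x 3 = 1 <;>
      by_cases hC : x 4 = 1 ∧ x 5 = 1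
    · have hall : ∀ j : Fin 6, x j = 1 := by
        intro j; fin_cases j
        exacts [hA.1, hA.2, hB.1, hB.2, hC.1, hC.2]
      simp only [if_pos hA, if_pos hB, if_pos hC, if_pos hall]
      norm_num
    all_goals {
      first
      | (have hnall : ¬ ∀ j : Fin 6, x j = 1 := fun h => hA ⟨h 0, h 1⟩
         simp only [if_pos, if_neg, hA, hB, hC, hnall, ite_true, ite_false]
         norm_num [hA, hB, hC, hnall])
      | (have hnall : ¬ ∀ j : Fin 6, x j = 1 := fun h => hB ⟨h 2, h 3⟩
         norm_num [hA, hB, hC, hnall])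
      | (have hnall : ¬ ∀ j : Fin 6, x j = 1 := fun h => hC ⟨h 4, h 5⟩
         norm_num [hA, hB, hC, hnall])
    }

end
end

section
/- For every m ≥ 1, the 2m-qubit vector s^{⊗m}, where s = |00⟩+|01⟩+|10⟩ ∈ ℂ²⊗ℂ², has stabiliser rank at most 5^{⌈m/3⌉}. Consequently a tensor of m star edges can be decomposed into at most 2^{βm+c} stabiliser terms with β = log₂(5)/3 ≈ 0.774 and a universal constant c. -/
noncomputable section

namespace SPowAux

open Matrix Finset

/-! ### Action of the generators on vectors -/

lemma apply1_mulVec (n : ℕ) (i : Fin n) (M : Matrix (Fin 2) (Fin 2) ℂ) (v : QVec n) :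
    (apply1 n i M).mulVec v
      = fun x => ∑ c : Fin 2, M (x i) c * v (Function.update x i c) := by
  funext x
  show ∑ y : Fin n → Fin 2,
      (if ∀ j, j ≠ i → x j = y j then M (x i) (y i) else 0) * v y = _
  have key : ∀ y : Fin n → Fin 2,
      (if ∀ j, j ≠ i → x j = y j then M (x i) (y i) else 0) * v y
        = ∑ c : Fin 2, if y = Function.update x i c then M (x i) c * v y else 0 := by
    intro y
    by_cases h : ∀ j, j ≠ i → x j = y j
    · have hy : y = Function.update x i (y i) := by
        funext j
        by_cases hj : j = i
        · subst hj; simp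
        · simp [Function.update_of_ne hj, h j hj]
      rw [if_pos h, Finset.sum_eq_single (y i)]
      · simp [← hy]
      · intro c _ hc
        rw [if_neg]
        intro hcon
        apply hc
        have := congrArg (fun f => f i) hcon
        simpa using this.symm
      · simp
    · rw [if_neg h, zero_mul]
      push_neg at h
      obtain ⟨j, hj, hxy⟩ := h
      symm
      apply Finset.sum_eq_zero
      intro c _
      rw [if_neg]
      intro hcon
      apply hxy
      have := congrArg (fun f => f j) hcon
      simpa [Function.update_of_ne hj] using this.symm
  rw [Finset.sum_congr rfl fun y _ => key y, Finset.sum_comm]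
  refine Finset.sum_congr rfl fun c _ => ?_
  rw [Finset.sum_ite_eq' Finset.univ (Function.update x i c)
    (fun y => M (x i) c * v y)]
  simp

lemma applyCZ_mulVec (n : ℕ) (i j : Fin n) (v : QVec n) :
    (applyCZ n i j).mulVec v
      = fun x => (if x i = 1 ∧ x j = 1 then (-1 : ℂ) else 1) * v x := by
  funext x
  show ∑ y : Fin n → Fin 2,
      (if x = y then (if x i = 1 ∧ x j = 1 then (-1:ℂ) else 1) else 0) * v y = _
  have key : ∀ y, (if x = y then (if x i = 1 ∧ x j = 1 then (-1:ℂ) else 1) else 0) * v y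
      = if x = y then (if x i = 1 ∧ x j = 1 then (-1:ℂ) else 1) * v y else 0 := by
    intro y; split <;> simp
  rw [Finset.sum_congr rfl fun y _ => key y, Finset.sum_ite_eq Finset.univ x
    (fun y => (if x i = 1 ∧ x j = 1 then (-1:ℂ) else 1) * v y)]
  simp

end SPowAux
namespace SPowAux

open Matrix Finset

/-! ### Pair-product states -/

def qa (m : ℕ) (k : Fin m) : Fin (2 * m) := ⟨2 * k.1, by have := k.isLt; omega⟩
def qb (m : ℕ) (k : Fin m) : Fin (2 * m) := ⟨2 * k.1 + 1, by have := k.isLt; omega⟩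

lemma qa_inj {m : ℕ} {k k' : Fin m} (h : qa m k = qa m k') : k = k' := by
  simp only [qa, Fin.mk.injEq] at h; exact Fin.ext (by omega)

lemma qb_inj {m : ℕ} {k k' : Fin m} (h : qb m k = qb m k') : k = k' := by
  simp only [qb, Fin.mk.injEq] at h; exact Fin.ext (by omega)

lemma qa_ne_qb {m : ℕ} (k k' : Fin m) : qa m k ≠ qb m k' := by
  simp only [qa, qb, ne_eq, Fin.mk.injEq]; omega

def pst (m : ℕ) (F : Fin m → Fin 2 → Fin 2 → ℂ) : QVec (2 * m) :=
  fun x => ∏ k, F k (x (qa m k)) (x (qb m k))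

lemma mulVec_qa (m : ℕ) (k0 : Fin m) (M : Matrix (Fin 2) (Fin 2) ℂ)
    (F : Fin m → Fin 2 → Fin 2 → ℂ) :
    (apply1 (2 * m) (qa m k0) M).mulVec (pst m F)
      = pst m (Function.update F k0 (fun a b => ∑ c : Fin 2, M a c * F k0 c b)) := by
  rw [apply1_mulVec]
  funext x
  simp only [pst]
  have hprod : ∀ c : Fin 2,
      ∏ k, F k (Function.update x (qa m k0) c (qa m k))
        (Function.update x (qa m k0) c (qb m k))
      = F k0 c (x (qb m k0)) * ∏ k ∈ Finset.univ.erase k0, F k (x (qa m k)) (x (qb m k)) := by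
    intro c
    rw [← Finset.mul_prod_erase Finset.univ _ (Finset.mem_univ k0)]
    congr 1
    · rw [Function.update_self, Function.update_of_ne (qa_ne_qb k0 k0).symm]
    · refine Finset.prod_congr rfl fun k hk => ?_
      have hk0 : k ≠ k0 := (Finset.mem_erase.mp hk).1
      rw [Function.update_of_ne (fun h => hk0 (qa_inj h)),
        Function.update_of_ne (qa_ne_qb k0 k).symm]
  rw [Finset.sum_congr rfl fun c _ => by rw [hprod c]]
  rw [← Finset.mul_prod_erase Finset.univ _ (Finset.mem_univ k0)]
  simp only [← mul_assoc, ← Finset.sum_mul]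
  congr 1
  · rw [Function.update_self]
  · refine Finset.prod_congr rfl fun k hk => ?_
    rw [Function.update_of_ne (Finset.mem_erase.mp hk).1]

lemma mulVec_qb (m : ℕ) (k0 : Fin m) (M : Matrix (Fin 2) (Fin 2) ℂ)
    (F : Fin m → Fin 2 → Fin 2 → ℂ) :
    (apply1 (2 * m) (qb m k0) M).mulVec (pst m F)
      = pst m (Function.update F k0 (fun a b => ∑ c : Fin 2, M b c * F k0 a c)) := by
  rw [apply1_mulVec]
  funext x
  simp only [pst]
  have hprod : ∀ c : Fin 2,
      ∏ k, F k (Function.update x (qb m k0) c (qa m k))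
        (Function.update x (qb m k0) c (qb m k))
      = F k0 (x (qa m k0)) c * ∏ k ∈ Finset.univ.erase k0, F k (x (qa m k)) (x (qb m k)) := by
    intro c
    rw [← Finset.mul_prod_erase Finset.univ _ (Finset.mem_univ k0)]
    congr 1
    · rw [Function.update_self, Function.update_of_ne (qa_ne_qb k0 k0)]
    · refine Finset.prod_congr rfl fun k hk => ?_
      have hk0 : k ≠ k0 := (Finset.mem_erase.mp hk).1
      rw [Function.update_of_ne (qa_ne_qb k k0),
        Function.update_of_ne (fun h => hk0 (qb_inj h))]
  rw [Finset.sum_congr rfl fun c _ => by rw [hprod c]]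
  rw [← Finset.mul_prod_erase Finset.univ _ (Finset.mem_univ k0)]
  simp only [← mul_assoc, ← Finset.sum_mul]
  congr 1
  · rw [Function.update_self]
  · refine Finset.prod_congr rfl fun k hk => ?_
    rw [Function.update_of_ne (Finset.mem_erase.mp hk).1]

lemma mulVec_cz (m : ℕ) (k0 : Fin m) (F : Fin m → Fin 2 → Fin 2 → ℂ) :
    (applyCZ (2 * m) (qa m k0) (qb m k0)).mulVec (pst m F)
      = pst m (Function.update F k0
          (fun a b => (if a = 1 ∧ b = 1 then (-1 : ℂ) else 1) * F k0 a b)) := by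
  rw [applyCZ_mulVec]
  funext x
  simp only [pst]
  rw [← Finset.mul_prod_erase Finset.univ _ (Finset.mem_univ k0),
    ← Finset.mul_prod_erase Finset.univ
      (fun k => Function.update F k0 _ k (x (qa m k)) (x (qb m k))) (Finset.mem_univ k0)]
  rw [← mul_assoc]
  congr 1
  · rw [Function.update_self]
  · refine Finset.prod_congr rfl fun k hk => ?_
    rw [Function.update_of_ne (Finset.mem_erase.mp hk).1]

end SPowAux
namespace SPowAux

open Matrix Finset

def e0 : Fin 2 → Fin 2 → ℂ := fun a b => if a = 0 ∧ b = 0 then 1 else 0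

def pvOne : Fin 3 → ℂ := ![2⁻¹, -2⁻¹, 1]
def pvZero : Fin 3 → ℂ := ![2⁻¹, 2⁻¹, 0]

def pv (ty : Fin 3) (a b : Fin 2) : ℂ := if a = 1 ∧ b = 1 then pvOne ty else pvZero ty

lemma rr : (((Real.sqrt 2 : ℝ) : ℂ))⁻¹ * (((Real.sqrt 2 : ℝ) : ℂ))⁻¹ = 2⁻¹ := by
  rw [← mul_inv, ← Complex.ofReal_mul, Real.mul_self_sqrt (by norm_num)]
  norm_num

lemma ketZeros_eq_pst (m : ℕ) : ketZeros (2 * m) = pst m (fun _ => e0) := by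
  funext x
  by_cases h : ∀ i, x i = 0
  · simp only [ketZeros, if_pos h, pst, e0]
    rw [Finset.prod_congr rfl fun k _ => by rw [h (qa m k), h (qb m k)]]
    simp
  · rw [ketZeros, if_neg h]
    push_neg at h
    obtain ⟨i, hi⟩ := h
    symm
    have hk : i.1 / 2 < m := by have := i.isLt; omega
    apply Finset.prod_eq_zero (Finset.mem_univ (⟨i.1 / 2, hk⟩ : Fin m))
    have : i = qa m ⟨i.1/2, hk⟩ ∨ i = qb m ⟨i.1/2, hk⟩ := by
      rcases Nat.even_or_odd i.1 with he | ho
      · left; exact Fin.ext (by simp only [qa]; rcases he with ⟨c, hc⟩; omega)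
      · right; exact Fin.ext (by simp only [qb]; rcases ho with ⟨c, hc⟩; omega)
    rcases this with h | h <;> rw [← h] <;> simp [e0, hi] <;>
      exact fun hc => absurd hc hi

end SPowAux
namespace SPowAux

open Matrix Finset

lemma stepHH (m : ℕ) (k0 : Fin m) (F : Fin m → Fin 2 → Fin 2 → ℂ) (hF : F k0 = e0) :
    (apply1 (2*m) (qa m k0) hadamardM * apply1 (2*m) (qb m k0) hadamardM).mulVec (pst m F)
      = pst m (Function.update F k0 (pv 0)) := by
  rw [← Matrix.mulVec_mulVec, mulVec_qb, mulVec_qa]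
  simp only [Function.update_self, Function.update_idem]
  refine congrArg (pst m) (congrArg (Function.update F k0) ?_)
  funext a b
  fin_cases a <;> fin_cases b <;>
    simp [hF, e0, hadamardM, Fin.sum_univ_two, pv, pvOne, pvZero, rr]

end SPowAux
namespace SPowAux

open Matrix Finset

lemma rsq : ((Real.sqrt 2 : ℝ) : ℂ) ^ 2 = 2 := by
  rw [← Complex.ofReal_pow, Real.sq_sqrt (by norm_num : (0:ℝ) ≤ 2)]; norm_num

lemma rq4 : ((Real.sqrt 2 : ℝ) : ℂ) ^ 4 = 4 := by
  have : ((Real.sqrt 2 : ℝ) : ℂ) ^ 4 = (((Real.sqrt 2 : ℝ) : ℂ) ^ 2) ^ 2 := by ring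
  rw [this, rsq]; norm_num

lemma step1 (m : ℕ) (k0 : Fin m) (F : Fin m → Fin 2 → Fin 2 → ℂ) (hF : F k0 = e0) :
    (applyCZ (2*m) (qa m k0) (qb m k0) *
      (apply1 (2*m) (qa m k0) hadamardM * apply1 (2*m) (qb m k0) hadamardM)).mulVec (pst m F)
      = pst m (Function.update F k0 (pv 1)) := by
  rw [← Matrix.mulVec_mulVec, stepHH m k0 F hF, mulVec_cz]
  simp only [Function.update_self, Function.update_idem]
  refine congrArg (pst m) (congrArg (Function.update F k0) ?_)
  funext a b
  fin_cases a <;> fin_cases b <;>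
    simp [pv, pvOne, pvZero]

lemma step2 (m : ℕ) (k0 : Fin m) (F : Fin m → Fin 2 → Fin 2 → ℂ) (hF : F k0 = e0) :
    (apply1 (2*m) (qa m k0) hadamardM *
      (apply1 (2*m) (qa m k0) phaseM *
        (apply1 (2*m) (qa m k0) phaseM *
          (apply1 (2*m) (qa m k0) hadamardM *
            (apply1 (2*m) (qb m k0) hadamardM *
              (apply1 (2*m) (qb m k0) phaseM *
                (apply1 (2*m) (qb m k0) phaseM *
                  apply1 (2*m) (qb m k0) hadamardM))))))).mulVec (pst m F)
      = pst m (Function.update F k0 (pv 2)) := by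
  simp only [← Matrix.mulVec_mulVec]
  rw [mulVec_qb, mulVec_qb, mulVec_qb, mulVec_qb, mulVec_qa, mulVec_qa, mulVec_qa, mulVec_qa]
  simp only [Function.update_self, Function.update_idem]
  refine congrArg (pst m) (congrArg (Function.update F k0) ?_)
  funext a b
  fin_cases a <;> fin_cases b <;>
    simp [hF, e0, hadamardM, phaseM, Fin.sum_univ_two, pv, pvOne, pvZero, rr] <;>
    ring_nf <;>
    simp [Complex.I_sq] <;>
    norm_num [rsq, rq4]

end SPowAux
namespace SPowAux

open Matrix Finset

lemma step (m : ℕ) (ty : Fin 3) (k0 : Fin m) (F : Fin m → Fin 2 → Fin 2 → ℂ)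
    (hF : F k0 = e0) :
    ∃ g, Clifford (2*m) g ∧
      g.mulVec (pst m F) = pst m (Function.update F k0 (pv ty)) := by
  have hne : qa m k0 ≠ qb m k0 := qa_ne_qb k0 k0
  fin_cases ty
  · exact ⟨_, .mul (.had _) (.had _), stepHH m k0 F hF⟩
  · exact ⟨_, .mul (.cz _ _ hne) (.mul (.had _) (.had _)), step1 m k0 F hF⟩
  · exact ⟨_, .mul (.had _) (.mul (.phase _) (.mul (.phase _) (.mul (.had _)
      (.mul (.had _) (.mul (.phase _) (.mul (.phase _) (.had _))))))),
      step2 m k0 F hF⟩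

lemma isStab_pst (m : ℕ) (t : Fin m → Fin 3) :
    IsStabState (2*m) (pst m (fun k => pv (t k))) := by
  suffices h : ∀ l : List (Fin m), l.Nodup →
      ∃ g, Clifford (2*m) g ∧
        g.mulVec (ketZeros (2*m)) = pst m (fun k => if k ∈ l then pv (t k) else e0) by
    obtain ⟨g, hg, he⟩ := h (List.finRange m) (List.nodup_finRange m)
    refine ⟨g, hg, ?_⟩
    rw [he]
    congr 1
    funext k
    simp [List.mem_finRange]
  intro l
  induction l with
  | nil =>
      intro _
      refine ⟨1, .one, ?_⟩
      rw [Matrix.one_mulVec, ketZeros_eq_pst]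
      simp
  | cons k0 l ih =>
      intro hl
      obtain ⟨g, hg, he⟩ := ih (List.Nodup.of_cons hl)
      have hk0 : k0 ∉ l := (List.nodup_cons.mp hl).1
      have hF : (fun k => if k ∈ l then pv (t k) else e0) k0 = e0 := by simp [hk0]
      obtain ⟨g', hg', he'⟩ := step m (t k0) k0 (fun k => if k ∈ l then pv (t k) else e0) hF
      refine ⟨g' * g, .mul hg' hg, ?_⟩
      rw [← Matrix.mulVec_mulVec, he, he']
      refine congrArg (pst m) ?_
      funext k
      by_cases h : k = k0
      · subst h; simp
      · simp [Function.update_of_ne h, h, List.mem_cons]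

end SPowAux
namespace SPowAux

open Matrix Finset

/-! ### The block decomposition -/

def blockEquiv (q r m : ℕ) (hm : m = 3*q + r) : (Fin q × Fin 3) ⊕ Fin r ≃ Fin m where
  toFun s := Sum.elim (fun ji => ⟨3 * ji.1.1 + ji.2.1, by
      have := ji.1.isLt; have := ji.2.isLt; omega⟩)
    (fun l => ⟨3 * q + l.1, by have := l.isLt; omega⟩) s
  invFun k := if h : (k : ℕ) < 3 * q then
      Sum.inl (⟨k.1 / 3, by omega⟩, ⟨k.1 % 3, by omega⟩)
    else Sum.inr ⟨k.1 - 3 * q, by have := k.isLt; omega⟩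
  left_inv s := by
    rcases s with ⟨j, i⟩ | l
    · have h : 3 * j.1 + i.1 < 3 * q := by have := j.isLt; have := i.isLt; omega
      simp only [Sum.elim_inl, h, dif_pos, ↓reduceDIte]
      congr 1
      have := i.isLt
      exact Prod.ext (Fin.ext (by simp only [Fin.val_mk]; omega)) (Fin.ext (by simp only [Fin.val_mk]; omega))
    · have h : ¬ (3 * q + l.1 < 3 * q) := by omega
      simp only [Sum.elim_inr, h, dif_neg, not_false_iff, ↓reduceDIte]
      congr 1
      exact Fin.ext (by simp only [Fin.val_mk]; omega)
  right_inv k := by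
    by_cases h : (k : ℕ) < 3 * q
    · simp only [dif_pos h, Sum.elim_inl]
      exact Fin.ext (by simp only [Fin.val_mk]; omega)
    · simp only [dif_neg h, Sum.elim_inr]
      exact Fin.ext (by simp only [Fin.val_mk]; have := k.isLt; omega)

def tri : Fin 5 → Fin 3 → Fin 3 := ![![0,0,1], ![0,1,0], ![1,0,0], ![1,1,1], ![2,2,2]]
def rem : Fin 2 → Fin 3 := ![0, 2]
def bcoef : Fin 5 → ℂ := ![2, 2, 2, 2, 1]
def rcoef : Fin 2 → ℂ := ![2, -1]

lemma tripleId (a b : Fin 3 → Fin 2) :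
    ∑ p : Fin 5, bcoef p * ∏ i, pv (tri p i) (a i) (b i)
      = ∏ i, if a i = 1 ∧ b i = 1 then (0:ℂ) else 1 := by
  by_cases h0 : a 0 = 1 ∧ b 0 = 1 <;> by_cases h1 : a 1 = 1 ∧ b 1 = 1 <;>
    by_cases h2 : a 2 = 1 ∧ b 2 = 1 <;>
    simp [Fin.sum_univ_five, Fin.prod_univ_three, pv, pvOne, pvZero, bcoef, tri,
      h0, h1, h2] <;>
    norm_num

lemma remId (a b : Fin 2) :
    ∑ d : Fin 2, rcoef d * pv (rem d) a b = if a = 1 ∧ b = 1 then (0:ℂ) else 1 := by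
  by_cases h : a = 1 ∧ b = 1 <;>
    simp [Fin.sum_univ_two, pv, pvOne, pvZero, rcoef, rem, h] <;> norm_num

end SPowAux
namespace SPowAux

open Matrix Finset

def dcoef (q r : ℕ) (uw : (Fin q → Fin 5) × (Fin r → Fin 2)) : ℂ :=
  (∏ j, bcoef (uw.1 j)) * ∏ l, rcoef (uw.2 l)

def dstate (m q r : ℕ) (hm : m = 3*q + r) (uw : (Fin q → Fin 5) × (Fin r → Fin 2)) :
    QVec (2*m) :=
  pst m (fun k => pv (Sum.elim (fun ji => tri (uw.1 ji.1) ji.2)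
    (fun l => rem (uw.2 l)) ((blockEquiv q r m hm).symm k)))

lemma sPow_eq (m q r : ℕ) (hm : m = 3*q + r) :
    sPow m = ∑ uw : (Fin q → Fin 5) × (Fin r → Fin 2),
      dcoef q r uw • dstate m q r hm uw := by
  simp only [dcoef, dstate]
  funext x
  set be := blockEquiv q r m hm with hbe
  simp only [Finset.sum_apply, Pi.smul_apply, smul_eq_mul, pst]
  calc sPow m x
      = ∏ k, (if x (qa m k) = 1 ∧ x (qb m k) = 1 then (0:ℂ) else 1) := rfl
    _ = ∏ s, (if x (qa m (be s)) = 1 ∧ x (qb m (be s)) = 1 then (0:ℂ) else 1) :=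
        (Equiv.prod_comp be _).symm
    _ = (∏ j, ∏ i, (if x (qa m (be (.inl (j,i)))) = 1 ∧ x (qb m (be (.inl (j,i)))) = 1
          then (0:ℂ) else 1))
        * ∏ l, (if x (qa m (be (.inr l))) = 1 ∧ x (qb m (be (.inr l))) = 1
          then (0:ℂ) else 1) := by
        rw [Fintype.prod_sum_type, Fintype.prod_prod_type]
    _ = (∏ j, ∑ p : Fin 5, bcoef p *
          ∏ i, pv (tri p i) (x (qa m (be (.inl (j,i))))) (x (qb m (be (.inl (j,i))))))
        * ∏ l, ∑ d : Fin 2, rcoef d *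
            pv (rem d) (x (qa m (be (.inr l)))) (x (qb m (be (.inr l)))) := by
        refine congrArg₂ (· * ·) ?_ ?_
        · exact Finset.prod_congr rfl fun j _ => (tripleId
            (fun i => x (qa m (be (.inl (j,i))))) (fun i => x (qb m (be (.inl (j,i)))))).symm
        · exact Finset.prod_congr rfl fun l _ => (remId _ _).symm
    _ = (∑ u : Fin q → Fin 5, ∏ j, bcoef (u j) *
          ∏ i, pv (tri (u j) i) (x (qa m (be (.inl (j,i))))) (x (qb m (be (.inl (j,i))))))
        * ∑ w : Fin r → Fin 2, ∏ l, rcoef (w l) *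
            pv (rem (w l)) (x (qa m (be (.inr l)))) (x (qb m (be (.inr l)))) := by
        rw [Finset.prod_univ_sum, Finset.prod_univ_sum]
        simp [Fintype.piFinset_univ]
    _ = ∑ u : Fin q → Fin 5, ∑ w : Fin r → Fin 2,
          (∏ j, bcoef (u j) *
            ∏ i, pv (tri (u j) i) (x (qa m (be (.inl (j,i))))) (x (qb m (be (.inl (j,i))))))
          * ∏ l, rcoef (w l) *
              pv (rem (w l)) (x (qa m (be (.inr l)))) (x (qb m (be (.inr l)))) := by
        rw [Finset.sum_mul_sum]
    _ = _ := by
        rw [Fintype.sum_prod_type]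
        refine Finset.sum_congr rfl fun u _ => Finset.sum_congr rfl fun w _ => ?_
        rw [← Equiv.prod_comp be (fun k => pv (Sum.elim (fun ji => tri (u ji.1) ji.2)
          (fun l => rem (w l)) (be.symm k)) (x (qa m k)) (x (qb m k)))]
        rw [Fintype.prod_sum_type, Fintype.prod_prod_type]
        simp only [Equiv.symm_apply_apply, Sum.elim_inl, Sum.elim_inr]
        rw [Finset.prod_mul_distrib, Finset.prod_mul_distrib]
        ring

end SPowAux
namespace SPowAux

open Matrix Finset

lemma isStab_ketZeros (n : ℕ) : IsStabState n (ketZeros n) :=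
  ⟨1, .one, (Matrix.one_mulVec _).symm⟩

lemma stabRankLE_of_family {n k : ℕ} {v : QVec n} (ι : Type) [Fintype ι]
    (hcard : Fintype.card ι ≤ k) (c : ι → ℂ) (ψ : ι → QVec n)
    (hψ : ∀ i, IsStabState n (ψ i)) (hv : v = ∑ i, c i • ψ i) :
    StabRankLE n v k := by
  classical
  let emb : ι ↪ Fin k := (Fintype.equivFin ι).toEmbedding.trans (Fin.castLEEmb hcard)
  refine ⟨Function.extend emb c 0, Function.extend emb ψ (fun _ => ketZeros n), ?_, ?_⟩
  · intro i
    rw [Function.extend_def]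
    split
    · exact hψ _
    · exact isStab_ketZeros n
  · rw [hv]
    rw [← Finset.sum_subset (Finset.subset_univ (Finset.univ.image emb))
      (fun i _ hi => ?_)]
    · rw [Finset.sum_image (fun a _ b _ h => emb.injective h)]
      refine Finset.sum_congr rfl fun i _ => ?_
      rw [emb.injective.extend_apply, emb.injective.extend_apply]
    · have hne : ¬ ∃ a, emb a = i := by
        intro ⟨a, ha⟩
        exact hi (Finset.mem_image.mpr ⟨a, Finset.mem_univ a, ha⟩)
      rw [Function.extend_apply' _ _ _ hne]
      simp


end SPowAux
namespace SPowAux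

lemma main1 (m : ℕ) : StabRankLE (2*m) (sPow m) (5 ^ ((m + 2) / 3)) := by
  classical
  obtain ⟨q, r, hm, hr⟩ : ∃ q r, m = 3*q + r ∧ r < 3 :=
    ⟨m / 3, m % 3, by omega, by omega⟩
  refine stabRankLE_of_family ((Fin q → Fin 5) × (Fin r → Fin 2)) ?_
    (dcoef q r) (dstate m q r hm)
    (fun uw => isStab_pst m _) (sPow_eq m q r hm)
  rw [Fintype.card_prod, Fintype.card_fun, Fintype.card_fun, Fintype.card_fin,
    Fintype.card_fin, Fintype.card_fin, Fintype.card_fin]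
  interval_cases r
  · have h3 : (m + 2) / 3 = q := by omega
    simp [h3]
  · have h3 : (m + 2) / 3 = q + 1 := by omega
    rw [h3, pow_succ]
    exact Nat.mul_le_mul_left _ (by norm_num)
  · have h3 : (m + 2) / 3 = q + 1 := by omega
    rw [h3, pow_succ]
    exact Nat.mul_le_mul_left _ (by norm_num)

end SPowAux


/-- For every `m ≥ 1`, the `2m`-qubit vector `s^{⊗m}` has stabiliser rank at most
`5^{⌈m/3⌉}`. Consequently a tensor of `m` star edges decomposes into at most
`2^{βm+c}` stabiliser terms with `β = log₂(5)/3` and a universal constant `c`. -/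
theorem sPow_stabRank_le :
    (∀ m : ℕ, 1 ≤ m → StabRankLE (2 * m) (sPow m) (5 ^ ((m + 2) / 3))) ∧
    ∃ c : ℝ, ∀ m : ℕ, 1 ≤ m → ∃ k : ℕ,
      StabRankLE (2 * m) (sPow m) k ∧
      (k : ℝ) ≤ 2 ^ (Real.logb 2 5 / 3 * m + c) := by
  refine ⟨fun m _ => SPowAux.main1 m, Real.logb 2 5, fun m _ => ⟨5 ^ ((m + 2) / 3),
    SPowAux.main1 m, ?_⟩⟩
  have hexp : Real.logb 2 5 / 3 * m + Real.logb 2 5 = Real.logb 2 5 * ((m : ℝ)/3 + 1) := by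
    ring
  rw [hexp, Real.rpow_mul (by norm_num : (0:ℝ) ≤ 2),
    Real.rpow_logb (by norm_num) (by norm_num) (by norm_num)]
  push_cast
  rw [← Real.rpow_natCast (5:ℝ) ((m + 2) / 3)]
  apply Real.rpow_le_rpow_of_exponent_le (by norm_num)
  have h2 : (((m + 2) / 3 : ℕ) : ℝ) * 3 ≤ (m : ℝ) + 2 := by
    exact_mod_cast Nat.div_mul_le_self (m + 2) 3
  linarith

end
end

section
/- The 3-qubit vector (|0⟩+|1⟩)^{⊗3} + |000⟩ (the tensor obtained by attaching three star edges to a common Z-spider of phase 0) can be written as a ℂ-linear combination of 4 stabiliser states of 3 qubits; in particular its stabiliser rank is at most 4. -/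
noncomputable section

namespace StarSpiderAux

/-- shorthand for `(√2)⁻¹` -/
def c' : ℂ := ((Real.sqrt 2 : ℝ) : ℂ)⁻¹

lemma mulVec_apply1 {n : ℕ} (i : Fin n) (M : Matrix (Fin 2) (Fin 2) ℂ)
    (f : QVec n) (x : Fin n → Fin 2) :
    (apply1 n i M).mulVec f x =
      M (x i) 0 * f (Function.update x i 0) + M (x i) 1 * f (Function.update x i 1) := by
  classical
  have hne : Function.update x i (0 : Fin 2) ≠ Function.update x i 1 := by
    intro h
    have := congrFun h i
    simp [Function.update_self] at this
  have key : ∀ b : Fin 2, apply1 n i M x (Function.update x i b) = M (x i) b := by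
    intro b
    have hcond : ∀ j, j ≠ i → x j = Function.update x i b j := by
      intro j hj
      simp [Function.update_of_ne hj]
    simp only [apply1]
    rw [if_pos hcond, Function.update_self]
  have hvanish : ∀ y ∈ (Finset.univ : Finset (Fin n → Fin 2)),
      y ∉ ({Function.update x i 0, Function.update x i 1} :
        Finset (Fin n → Fin 2)) → apply1 n i M x y * f y = 0 := by
    intro y _ hy
    simp only [Finset.mem_insert, Finset.mem_singleton] at hy
    push_neg at hy
    have hcond : ¬ ∀ j, j ≠ i → x j = y j := by
      intro hc
      have hyeq : y = Function.update x i (y i) := by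
        funext j
        by_cases hj : j = i
        · subst hj; simp [Function.update_self]
        · simp [Function.update_of_ne hj, (hc j hj).symm]
      have : y i = 0 ∨ y i = 1 := by omega
      rcases this with h | h <;> rw [h] at hyeq
      · exact hy.1 hyeq
      · exact hy.2 hyeq
    simp [apply1, hcond]
  calc (apply1 n i M).mulVec f x
      = ∑ y, apply1 n i M x y * f y := rfl
    _ = ∑ y ∈ ({Function.update x i 0, Function.update x i 1} :
          Finset (Fin n → Fin 2)), apply1 n i M x y * f y :=
        (Finset.sum_subset (Finset.subset_univ _) hvanish).symm
    _ = apply1 n i M x (Function.update x i 0) * f (Function.update x i 0) +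
        apply1 n i M x (Function.update x i 1) * f (Function.update x i 1) :=
        Finset.sum_pair hne
    _ = _ := by rw [key 0, key 1]

lemma had_col0 (a : Fin 2) : hadamardM a 0 = c' := by
  simp [hadamardM, c']

lemma had_col1 (a : Fin 2) : hadamardM a 1 = if a = 1 then -c' else c' := by
  by_cases h : a = 1 <;> simp [hadamardM, c', h]

lemma forall3 (x : Fin 3 → Fin 2) :
    (∀ i, x i = 0) ↔ x 0 = 0 ∧ x 1 = 0 ∧ x 2 = 0 := by
  constructor
  · intro h; exact ⟨h 0, h 1, h 2⟩
  · rintro ⟨a, b, c⟩ i; fin_cases i <;> assumption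

lemma step2 : (apply1 3 2 hadamardM).mulVec (ketZeros 3) =
    fun x => c' * (if x 0 = 0 ∧ x 1 = 0 then 1 else 0) := by
  funext x
  rw [mulVec_apply1, had_col0, had_col1]
  have h20 : ((0 : Fin 3)) ≠ 2 := by decide
  have h21 : ((1 : Fin 3)) ≠ 2 := by decide
  simp only [ketZeros, forall3, Function.update_self, Function.update_of_ne h20,
    Function.update_of_ne h21]
  norm_num

lemma step1 : (apply1 3 1 hadamardM).mulVec
    (fun x => c' * (if x 0 = 0 ∧ x 1 = 0 then 1 else 0)) =
    fun x => c' ^ 2 * (if x 0 = 0 then 1 else 0) := by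
  funext x
  rw [mulVec_apply1, had_col0, had_col1]
  have h01 : ((0 : Fin 3)) ≠ 1 := by decide
  simp only [Function.update_self, Function.update_of_ne h01]
  norm_num
  ring

lemma step0 : (apply1 3 0 hadamardM).mulVec
    (fun x => c' ^ 2 * (if x 0 = 0 then 1 else 0)) = fun _ => c' ^ 3 := by
  funext x
  rw [mulVec_apply1, had_col0, had_col1]
  simp only [Function.update_self]
  norm_num
  ring

lemma sqrt2_ne : ((Real.sqrt 2 : ℝ) : ℂ) ≠ 0 := by
  rw [Complex.ofReal_ne_zero]
  exact ne_of_gt (Real.sqrt_pos.mpr (by norm_num))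

lemma coeff_cancel : ((Real.sqrt 2 : ℝ) : ℂ) ^ 3 * c' ^ 3 = 1 := by
  rw [c', ← mul_pow, mul_inv_cancel₀ sqrt2_ne, one_pow]

end StarSpiderAux

open StarSpiderAux in
/-- The 3-qubit vector `(|0⟩+|1⟩)^{⊗3} + |000⟩` is a ℂ-linear combination of 4
stabiliser states of 3 qubits; in particular its stabiliser rank is at most 4. -/
theorem star_spider_zero_stabRank_le_four :
    StabRankLE 3 (fun x => 1 + if ∀ i, x i = 0 then 1 else 0) 4 := by
  refine ⟨![((Real.sqrt 2 : ℝ) : ℂ) ^ 3, 1, 0, 0],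
    ![fun _ => c' ^ 3, ketZeros 3, ketZeros 3, ketZeros 3], ?_, ?_⟩
  · intro i
    have hzero : IsStabState 3 (ketZeros 3) :=
      ⟨1, Clifford.one, (Matrix.one_mulVec _).symm⟩
    have hplus : IsStabState 3 (fun _ => c' ^ 3) := by
      refine ⟨apply1 3 0 hadamardM * (apply1 3 1 hadamardM * apply1 3 2 hadamardM),
        Clifford.mul (Clifford.had 0) (Clifford.mul (Clifford.had 1) (Clifford.had 2)), ?_⟩
      rw [← Matrix.mulVec_mulVec, ← Matrix.mulVec_mulVec, step2, step1, step0]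
    fin_cases i
    · exact hplus
    · exact hzero
    · exact hzero
    · exact hzero
  · funext x
    simp only [Fin.sum_univ_four, Matrix.cons_val_zero, Matrix.cons_val_one,
      Matrix.head_cons, Matrix.cons_val_two, Matrix.tail_cons, Matrix.cons_val_three,
      Pi.add_apply, Pi.smul_apply, smul_eq_mul, zero_mul, one_mul, zero_smul]
    simp only [ketZeros, coeff_cancel]
    simp

end
end

section
/- For either sign ±, the 3-qubit vector (|0⟩+|1⟩)^{⊗3} ± i·|000⟩ (the tensor obtained by attaching three star edges to a common Z-spider of phase ±π/2) can be written as a ℂ-linear combination of 4 stabiliser states of 3 qubits; in particular its stabiliser rank is at most 4. -/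
noncomputable section

lemma mulVec_apply1 {n : ℕ} (i : Fin n) (M : Matrix (Fin 2) (Fin 2) ℂ) (v : QVec n)
    (x : Fin n → Fin 2) :
    (apply1 n i M).mulVec v x = ∑ b : Fin 2, M (x i) b * v (Function.update x i b) := by
  simp only [Matrix.mulVec, dotProduct, apply1, ite_mul, zero_mul]
  have h1 : ∑ b : Fin 2, M (x i) b * v (Function.update x i b)
      = ∑ y ∈ Finset.univ.image (fun b : Fin 2 => Function.update x i b),
          (if ∀ j, j ≠ i → x j = y j then M (x i) (y i) * v y else 0) := by
    rw [Finset.sum_image (fun a _ b _ h => by simpa using congrFun h i)]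
    refine Finset.sum_congr rfl fun b _ => ?_
    rw [if_pos fun j hj => by simp [Function.update_apply, hj]]
    simp
  rw [h1]
  refine (Finset.sum_subset (Finset.subset_univ _) fun y _ hy => ?_).symm
  rw [if_neg]
  intro h
  exact hy (Finset.mem_image.mpr ⟨y i, Finset.mem_univ _, funext fun j => by
    by_cases hj : j = i
    · simp [Function.update_apply, hj]
    · simp [Function.update_apply, hj, (h j hj).symm]⟩)

lemma forall_fin3 (p : Fin 3 → Prop) : (∀ i, p i) ↔ p 0 ∧ p 1 ∧ p 2 :=
  ⟨fun h => ⟨h 0, h 1, h 2⟩, by rintro ⟨h0, h1, h2⟩ i; fin_cases i <;> assumption⟩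

lemma hadamard3_ketZeros :
    ((apply1 3 0 hadamardM) * ((apply1 3 1 hadamardM) * (apply1 3 2 hadamardM))).mulVec
      (ketZeros 3) = fun _ => (((Real.sqrt 2 : ℝ) : ℂ))⁻¹ ^ 3 := by
  funext x
  rw [← Matrix.mulVec_mulVec, ← Matrix.mulVec_mulVec]
  simp only [mulVec_apply1, Fin.sum_univ_two, hadamardM, ketZeros, forall_fin3,
    Function.update_apply]
  norm_num [Fin.ext_iff]
  ring

/-- For either sign, the 3-qubit vector `(|0⟩+|1⟩)^{⊗3} ± i·|000⟩` is a ℂ-linear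
combination of 4 stabiliser states of 3 qubits; in particular its stabiliser
rank is at most 4. -/
theorem star_spider_pi_half_stabRank_le_four :
    ∀ ε : ℂ, ε = Complex.I ∨ ε = -Complex.I →
      StabRankLE 3 (fun x => 1 + ε * if ∀ i, x i = 0 then 1 else 0) 4 := by
  intro ε hε
  refine ⟨![((Real.sqrt 2 : ℝ) : ℂ) ^ 3, ε, 0, 0],
    ![((apply1 3 0 hadamardM) * ((apply1 3 1 hadamardM) * (apply1 3 2 hadamardM))).mulVec
        (ketZeros 3), ketZeros 3, ketZeros 3, ketZeros 3], ?_, ?_⟩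
  · intro i
    fin_cases i
    · exact ⟨_, Clifford.mul (Clifford.had 0) (Clifford.mul (Clifford.had 1) (Clifford.had 2)),
        rfl⟩
    all_goals exact ⟨1, Clifford.one, (Matrix.one_mulVec _).symm⟩
  · have h2 : ((Real.sqrt 2 : ℝ) : ℂ) ≠ 0 := by
      simp [(Real.sqrt_ne_zero' (x := 2)).mpr (by norm_num)]
    funext x
    simp only [Fin.sum_univ_four, hadamard3_ketZeros, Pi.add_apply, Pi.smul_apply,
      Matrix.cons_val_zero, Matrix.cons_val_one, Matrix.head_cons, smul_eq_mul, ketZeros,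
      Matrix.cons_val_fin_one, Matrix.cons_val_two, Matrix.cons_val_three, Matrix.tail_cons,
      zero_mul, add_zero]
    rw [show ((Real.sqrt 2 : ℝ) : ℂ) ^ 3 * (((Real.sqrt 2 : ℝ) : ℂ))⁻¹ ^ 3 = 1 by
      field_simp]

end
end
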